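/- arXiv:2504.09928 — 4 statements merged into one kernel-verified Lean document; each statement's English description precedes it below -/
import Mathlib

section
/- Let α > 0 and let f ∈ B₁(α) with logarithmic coefficients γ₁, γ₂. Then −1/√((α+1)² + 1) ≤ |γ₂| − |γ₁| ≤ 1/(α+2). -/
open Complex Metric

/-- The Bazilevič class `B₁(α)`: `f` is analytic on the unit disk with `f 0 = 0`,
`f' 0 = 1`, and `Re[(f z / z)^(α-1) * f' z] > 0` on the disk, where the power is taken
with the analytic branch equal to `1` at `z = 0`.  The branch is encoded via an analytic
function `h` with `h 0 = 0` and `f z = z * exp (h z)` on the disk (so that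
`h = log (f z / z)` and `(f z / z)^(α-1) = exp ((α-1) * h z)`). -/
def BazilevicB1 (α : ℝ) (f h : ℂ → ℂ) : Prop :=
  AnalyticOnNhd ℂ f (ball 0 1) ∧ AnalyticOnNhd ℂ h (ball 0 1) ∧
  f 0 = 0 ∧ deriv f 0 = 1 ∧ h 0 = 0 ∧
  (∀ z ∈ ball (0 : ℂ) 1, f z = z * Complex.exp (h z)) ∧
  (∀ z ∈ ball (0 : ℂ) 1, 0 < (Complex.exp ((α - 1 : ℂ) * h z) * deriv f z).re)

/-- The first logarithmic coefficient `γ₁`, from `h = log (f z / z) = 2 ∑ γₙ zⁿ`. -/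
noncomputable def logCoeff1 (h : ℂ → ℂ) : ℂ := deriv h 0 / 2

/-- The second logarithmic coefficient `γ₂`, from `h = log (f z / z) = 2 ∑ γₙ zⁿ`. -/
noncomputable def logCoeff2 (h : ℂ → ℂ) : ℂ := iteratedDeriv 2 h 0 / 4

/-- The second Taylor coefficient `a₂` of `f`. -/
noncomputable def coeff2 (f : ℂ → ℂ) : ℂ := iteratedDeriv 2 f 0 / 2

/-- The third Taylor coefficient `a₃` of `f`. -/
noncomputable def coeff3 (f : ℂ → ℂ) : ℂ := iteratedDeriv 3 f 0 / 6

/-!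
The function `p z = (f z / z) ^ (α - 1) * f' z = exp (α h z) * (1 + z h' z)` has `Re p > 0`,
`p 0 = 1`, `p'(0) = 2 (α + 1) γ₁` and `p''(0) = 4 (α + 2) (γ₂ + α γ₁²)`. Writing
`(p - 1) / (p + 1) = z v(z)`, the Schwarz lemma gives `|v| ≤ 1`, and the Schwarz–Pick inequality
`|v'(0)| ≤ 1 - |v(0)|²` becomes `|p''(0) - p'(0)²| ≤ 4 - |p'(0)|²`, that is
`|(α + 2) γ₂ - γ₁²| ≤ 1 - (α + 1)² |γ₁|²`. Both bounds follow from this by the reverse triangle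
inequality and elementary real estimates.
-/

open ComplexConjugate Set Filter Topology

theorem normSq_one_sub_conj_mul_sub_normSq_sub (a w : ℂ) :
    normSq (1 - conj a * w) - normSq (w - a) = (1 - normSq a) * (1 - normSq w) := by
  apply ofReal_injective
  push_cast
  simp only [normSq_eq_conj_mul_self, map_sub, map_mul, map_one, conj_conj]
  ring

theorem norm_sub_le_norm_one_sub_conj_mul {a w : ℂ} (ha : ‖a‖ ≤ 1) (hw : ‖w‖ ≤ 1) :
    ‖w - a‖ ≤ ‖1 - conj a * w‖ := by
  have key := normSq_one_sub_conj_mul_sub_normSq_sub a w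
  rw [normSq_eq_norm_sq, normSq_eq_norm_sq, normSq_eq_norm_sq, normSq_eq_norm_sq] at key
  have : 0 ≤ (1 - ‖a‖ ^ 2) * (1 - ‖w‖ ^ 2) := by
    apply mul_nonneg <;> nlinarith [norm_nonneg a, norm_nonneg w]
  exact le_of_sq_le_sq (by linarith) (norm_nonneg _)

theorem norm_deriv_le_one_sub_norm_sq {φ : ℂ → ℂ} (hd : DifferentiableOn ℂ φ (ball 0 1))
    (hm : MapsTo φ (ball 0 1) (closedBall 0 1)) : ‖deriv φ 0‖ ≤ 1 - ‖φ 0‖ ^ 2 := by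
  set a := φ 0 with ha_def
  have hball : ball (0 : ℂ) 1 ∈ 𝓝 0 := ball_mem_nhds 0 one_pos
  have hda : ∀ z ∈ ball (0 : ℂ) 1, DifferentiableAt ℂ φ z :=
    fun z hz => hd.differentiableAt (isOpen_ball.mem_nhds hz)
  have hφ1 : ∀ z ∈ ball (0 : ℂ) 1, ‖φ z‖ ≤ 1 := fun z hz => by simpa using hm hz
  rcases (hφ1 0 (mem_ball_self one_pos)).eq_or_lt with ha | ha
  · have hmax : IsLocalMax (norm ∘ φ) 0 :=
      eventually_of_mem hball fun z hz => (hφ1 z hz).trans ha.ge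
    have hconst : φ =ᶠ[𝓝 0] fun _ => a :=
      eventually_eq_of_isLocalMax_norm (eventually_of_mem hball hda) hmax
    rw [hconst.deriv_eq, deriv_const, ha]
    norm_num
  · have hden : ∀ z ∈ ball (0 : ℂ) 1, 1 - conj a * φ z ≠ 0 := by
      intro z hz h
      have : ‖conj a * φ z‖ < 1 := by
        rw [norm_mul, RCLike.norm_conj]
        nlinarith [hφ1 z hz, norm_nonneg a, norm_nonneg (φ z)]
      rw [← eq_of_sub_eq_zero h, norm_one] at this
      exact this.false
    set ψ := fun z => (φ z - a) / (1 - conj a * φ z)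
    have hψm : MapsTo ψ (ball 0 1) (closedBall (ψ 0) 1) := by
      intro z hz
      rw [show ψ 0 = 0 by simp [ψ, a], mem_closedBall_zero_iff, norm_div]
      exact div_le_one_of_le₀ (norm_sub_le_norm_one_sub_conj_mul ha.le (hφ1 z hz))
        (norm_nonneg _)
    have hψd : DifferentiableOn ℂ ψ (ball 0 1) :=
      (hd.sub_const a).div ((differentiableOn_const 1).sub (hd.const_mul _)) hden
    have hψ' : HasDerivAt ψ (deriv φ 0 / (1 - conj a * a)) 0 := by
      have hφ' := (hda 0 (mem_ball_self one_pos)).hasDerivAt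
      refine (hφ'.sub_const a).fun_div ((hφ'.const_mul (conj a)).const_sub 1)
        (hden 0 (mem_ball_self one_pos)) |>.congr_deriv ?_
      have := hden 0 (mem_ball_self one_pos)
      rw [← ha_def] at this ⊢
      field_simp
      ring
    have hnorm : ‖1 - conj a * a‖ = 1 - ‖a‖ ^ 2 := by
      rw [← normSq_eq_conj_mul_self, normSq_eq_norm_sq, ← ofReal_one, ← ofReal_sub, norm_real,
        Real.norm_of_nonneg (by nlinarith [norm_nonneg a])]
    have := norm_deriv_le_div_of_mapsTo_ball hψd hψm one_pos
    rw [hψ'.deriv, norm_div, hnorm, div_one, div_le_one (by nlinarith [norm_nonneg a])] at this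
    exact this

theorem iteratedDeriv_fun_id_mul_zero {𝕜 : Type*} [NontriviallyNormedField 𝕜] {n : ℕ}
    {u : 𝕜 → 𝕜} (hu : ContDiffAt 𝕜 n u 0) :
    iteratedDeriv n (fun z => z * u z) 0 = n * iteratedDeriv (n - 1) u 0 := by
  rw [iteratedDeriv_fun_mul (f := fun z => z) contDiffAt_id hu]
  simp +contextual [iteratedDeriv_fun_id_zero]

theorem norm_sub_one_div_add_one_lt_one {w : ℂ} (hw : 0 < w.re) :
    ‖(w - 1) / (w + 1)‖ < 1 := by
  have hne : w + 1 ≠ 0 := fun h => by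
    have := congrArg re h
    simp only [add_re, one_re, zero_re] at this
    linarith
  rw [norm_div, div_lt_one (norm_pos_iff.2 hne), ← sq_lt_sq₀ (norm_nonneg _) (norm_nonneg _),
    ← normSq_eq_norm_sq, ← normSq_eq_norm_sq, normSq_apply, normSq_apply]
  simp only [sub_re, add_re, one_re, sub_im, add_im, one_im]
  nlinarith

theorem dslope_fun_id_mul_zero {𝕜 : Type*} [NontriviallyNormedField 𝕜] {v : 𝕜 → 𝕜}
    (hv : DifferentiableAt 𝕜 v 0) : dslope (fun z => z * v z) 0 = v := by
  funext z
  rcases eq_or_ne z 0 with rfl | hz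
  · rw [dslope_same, ((hasDerivAt_id' 0).fun_mul hv.hasDerivAt).deriv]
    simp
  · rw [dslope_of_ne _ hz, slope_def_field]
    field_simp
    ring

theorem mapsTo_closedBall_of_mapsTo_id_mul {v : ℂ → ℂ} (hv : DifferentiableOn ℂ v (ball 0 1))
    (hm : MapsTo (fun z => z * v z) (ball 0 1) (ball 0 1)) :
    MapsTo v (ball 0 1) (closedBall 0 1) := by
  have hm' : MapsTo (fun z => z * v z) (ball 0 1) (closedBall (0 * v 0) 1) := by
    rw [zero_mul]
    exact hm.mono_right ball_subset_closedBall
  intro z hz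
  simpa [dslope_fun_id_mul_zero (hv.differentiableAt (ball_mem_nhds 0 one_pos))] using
    norm_dslope_le_div_of_mapsTo_ball (differentiableOn_id.fun_mul hv) hm' hz

theorem norm_iteratedDeriv_two_sub_sq_le_of_re_pos {p : ℂ → ℂ}
    (hd : DifferentiableOn ℂ p (ball 0 1)) (hre : ∀ z ∈ ball (0 : ℂ) 1, 0 < (p z).re)
    (h0 : p 0 = 1) : ‖iteratedDeriv 2 p 0 - deriv p 0 ^ 2‖ ≤ 4 - ‖deriv p 0‖ ^ 2 := by
  have hball : ball (0 : ℂ) 1 ∈ 𝓝 0 := ball_mem_nhds 0 one_pos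
  have h0b : (0 : ℂ) ∈ ball (0 : ℂ) 1 := mem_ball_self one_pos
  set u := dslope p 0
  have hu : DifferentiableOn ℂ u (ball 0 1) := (differentiableOn_dslope hball).2 hd
  have hp : p = fun z => 1 + z * u z := funext fun z => by
    have := sub_smul_dslope p 0 z
    rw [sub_zero, smul_eq_mul, h0] at this
    rw [this, add_sub_cancel]
  have hne : ∀ z ∈ ball (0 : ℂ) 1, p z + 1 ≠ 0 := fun z hz h => by
    have := congrArg re h
    simp only [add_re, one_re, zero_re] at this
    linarith [hre z hz]
  set v := fun z => u z / (p z + 1)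
  have hv : DifferentiableOn ℂ v (ball 0 1) := hu.div (hd.add_const 1) hne
  have hv1 : MapsTo v (ball 0 1) (closedBall 0 1) := by
    refine mapsTo_closedBall_of_mapsTo_id_mul hv fun z hz => ?_
    have : z * v z = (p z - 1) / (p z + 1) := by
      simp only [v]; nth_rewrite 2 [hp]; ring
    simp only [mem_ball_zero_iff]
    rw [this]
    exact norm_sub_one_div_add_one_lt_one (hre z hz)
  have key := norm_deriv_le_one_sub_norm_sq hv hv1
  have hu0 : u 0 = deriv p 0 := dslope_same p 0
  have hp2 : iteratedDeriv 2 p 0 = 2 * deriv u 0 := by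
    rw [hp, iteratedDeriv_const_add two_pos, iteratedDeriv_fun_id_mul_zero
      ((hu.contDiffOn isOpen_ball).contDiffAt hball)]
    simp
  have hv0 : v 0 = deriv p 0 / 2 := by simp [v, h0, hu0]; ring
  have hdv0 : deriv v 0 = (iteratedDeriv 2 p 0 - deriv p 0 ^ 2) / 4 := by
    have hu' := (hu.differentiableAt hball).hasDerivAt
    have hp' := ((hd.differentiableAt hball).hasDerivAt.add_const 1)
    rw [(hu'.fun_div hp' (hne 0 h0b)).deriv, hp2, hu0, h0]
    ring
  rw [hv0, hdv0, norm_div, norm_div] at key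
  simp only [norm_ofNat] at key
  linarith

theorem iteratedDeriv_two_cexp {g : ℂ → ℂ} {x : ℂ} (hg : AnalyticAt ℂ g x) :
    iteratedDeriv 2 (fun z => exp (g z)) x =
      (iteratedDeriv 2 g x + deriv g x ^ 2) * exp (g x) := by
  have hderiv : deriv (fun z => exp (g z)) =ᶠ[𝓝 x] fun z => exp (g z) * deriv g z :=
    hg.eventually_analyticAt.mono fun z hz => deriv_cexp hz.differentiableAt
  simp only [iteratedDeriv_succ, iteratedDeriv_zero]
  rw [hderiv.deriv_eq,
    (hg.differentiableAt.hasDerivAt.cexp.fun_mul hg.deriv.differentiableAt.hasDerivAt).deriv]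
  ring

/-- For `f z = z * exp (h z)`, this is `(f z / z) ^ (c - 1) * deriv f z`. -/
noncomputable def bazilevicCaratheodory (c : ℂ) (h : ℂ → ℂ) : ℂ → ℂ :=
  fun z => exp (c * h z) * (1 + z * deriv h z)

section bazilevicCaratheodory

variable {c : ℂ} {h : ℂ → ℂ}

theorem bazilevicCaratheodory_zero (h0 : h 0 = 0) : bazilevicCaratheodory c h 0 = 1 := by
  simp [bazilevicCaratheodory, h0]

theorem AnalyticAt.bazilevicCaratheodory {z : ℂ} (hh : AnalyticAt ℂ h z) (c : ℂ) :
    AnalyticAt ℂ (bazilevicCaratheodory c h) z :=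
  (analyticAt_const.mul hh).cexp.mul (analyticAt_const.add (analyticAt_id.mul hh.deriv))

theorem deriv_cexp_const_mul_zero (hh : DifferentiableAt ℂ h 0) (h0 : h 0 = 0) :
    deriv (fun z => exp (c * h z)) 0 = c * deriv h 0 := by
  rw [deriv_cexp (hh.const_mul c), deriv_const_mul _ hh, h0]
  simp

theorem iteratedDeriv_two_cexp_const_mul_zero (hh : AnalyticAt ℂ h 0) (h0 : h 0 = 0) :
    iteratedDeriv 2 (fun z => exp (c * h z)) 0 =
      c * iteratedDeriv 2 h 0 + (c * deriv h 0) ^ 2 := by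
  rw [iteratedDeriv_two_cexp (g := fun z => c * h z) (analyticAt_const.mul hh),
    iteratedDeriv_const_mul_field, deriv_const_mul _ hh.differentiableAt, h0]
  simp

theorem deriv_one_add_mul_deriv_zero (hh : AnalyticAt ℂ h 0) :
    deriv (fun z => 1 + z * deriv h z) 0 = deriv h 0 := by
  rw [← iteratedDeriv_one, iteratedDeriv_const_add one_pos,
    iteratedDeriv_fun_id_mul_zero hh.deriv.contDiffAt]
  simp

theorem iteratedDeriv_two_one_add_mul_deriv_zero (hh : AnalyticAt ℂ h 0) :
    iteratedDeriv 2 (fun z => 1 + z * deriv h z) 0 = 2 * iteratedDeriv 2 h 0 := by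
  rw [iteratedDeriv_const_add two_pos, iteratedDeriv_fun_id_mul_zero hh.deriv.contDiffAt,
    iteratedDeriv_succ' (n := 1)]
  simp

theorem deriv_bazilevicCaratheodory_zero (hh : AnalyticAt ℂ h 0) (h0 : h 0 = 0) :
    deriv (bazilevicCaratheodory c h) 0 = (c + 1) * deriv h 0 := by
  have hE : AnalyticAt ℂ (fun z => exp (c * h z)) 0 := (analyticAt_const.mul hh).cexp
  have hQ : AnalyticAt ℂ (fun z => 1 + z * deriv h z) 0 :=
    analyticAt_const.add (analyticAt_id.mul hh.deriv)
  unfold bazilevicCaratheodory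
  rw [deriv_fun_mul hE.differentiableAt hQ.differentiableAt,
    deriv_cexp_const_mul_zero hh.differentiableAt h0, deriv_one_add_mul_deriv_zero hh]
  simp [h0]
  ring

theorem iteratedDeriv_two_bazilevicCaratheodory_zero (hh : AnalyticAt ℂ h 0) (h0 : h 0 = 0) :
    iteratedDeriv 2 (bazilevicCaratheodory c h) 0 =
      (c + 2) * (iteratedDeriv 2 h 0 + c * deriv h 0 ^ 2) := by
  have hE : AnalyticAt ℂ (fun z => exp (c * h z)) 0 := (analyticAt_const.mul hh).cexp
  have hQ : AnalyticAt ℂ (fun z => 1 + z * deriv h z) 0 :=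
    analyticAt_const.add (analyticAt_id.mul hh.deriv)
  unfold bazilevicCaratheodory
  rw [iteratedDeriv_fun_mul hE.contDiffAt hQ.contDiffAt]
  simp only [Finset.sum_range_succ, Finset.sum_range_zero, Nat.reduceSub, iteratedDeriv_zero,
    iteratedDeriv_one, deriv_cexp_const_mul_zero hh.differentiableAt h0,
    iteratedDeriv_two_cexp_const_mul_zero hh h0, deriv_one_add_mul_deriv_zero hh,
    iteratedDeriv_two_one_add_mul_deriv_zero hh, h0]
  simp
  ring

end bazilevicCaratheodory

theorem BazilevicB1.re_bazilevicCaratheodory_pos {α : ℝ} {f h : ℂ → ℂ} (hf : BazilevicB1 α f h)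
    {z : ℂ} (hz : z ∈ ball (0 : ℂ) 1) : 0 < (bazilevicCaratheodory α h z).re := by
  obtain ⟨-, hh, -, -, -, hfe, hre⟩ := hf
  have hderiv : deriv f z = exp (h z) * (1 + z * deriv h z) := by
    have hev : f =ᶠ[𝓝 z] fun w => w * exp (h w) :=
      eventually_of_mem (isOpen_ball.mem_nhds hz) hfe
    rw [hev.deriv_eq,
      ((hasDerivAt_id' z).fun_mul (hh z hz).differentiableAt.hasDerivAt.cexp).deriv]
    ring
  have := hre z hz
  rwa [hderiv, ← mul_assoc, ← exp_add, show ((α : ℂ) - 1) * h z + h z = α * h z by ring] at this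

theorem BazilevicB1.norm_mul_logCoeff2_sub_sq_le {α : ℝ} {f h : ℂ → ℂ}
    (hf : BazilevicB1 α f h) :
    ‖((α + 2 : ℝ) : ℂ) * logCoeff2 h - logCoeff1 h ^ 2‖ ≤
      1 - (α + 1) ^ 2 * ‖logCoeff1 h‖ ^ 2 := by
  have hh : AnalyticOnNhd ℂ h (ball 0 1) := hf.2.1
  have h0 : h 0 = 0 := hf.2.2.2.2.1
  have hh0 : AnalyticAt ℂ h 0 := hh 0 (mem_ball_self one_pos)
  have hcar := norm_iteratedDeriv_two_sub_sq_le_of_re_pos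
    (fun z hz => ((hh z hz).bazilevicCaratheodory α).differentiableAt.differentiableWithinAt)
    (fun z hz => hf.re_bazilevicCaratheodory_pos hz) (bazilevicCaratheodory_zero h0)
  rw [iteratedDeriv_two_bazilevicCaratheodory_zero hh0 h0,
    deriv_bazilevicCaratheodory_zero hh0 h0] at hcar
  set A := deriv h 0
  set B := iteratedDeriv 2 h 0
  have hnum : ((α : ℂ) + 2) * (B + α * A ^ 2) - ((α + 1) * A) ^ 2 =
      4 * (((α + 2 : ℝ) : ℂ) * (B / 4) - (A / 2) ^ 2) := by
    push_cast
    ring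
  have hnorm : ‖((α : ℂ) + 1) * A‖ ^ 2 = 4 * ((α + 1) ^ 2 * ‖A / 2‖ ^ 2) := by
    rw [norm_mul, ← ofReal_one, ← ofReal_add, norm_real, norm_div, Real.norm_eq_abs, mul_pow,
      sq_abs]
    norm_num
    ring
  rw [hnum, hnorm, norm_mul, norm_ofNat] at hcar
  unfold logCoeff1 logCoeff2
  linarith

theorem sub_le_one_div_of_mul_sub_sq_le {α X Y : ℝ} (hα : 0 ≤ α) (hX : 0 ≤ X)
    (h : (α + 2) * Y - X ^ 2 ≤ 1 - (α + 1) ^ 2 * X ^ 2) : Y - X ≤ 1 / (α + 2) := by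
  have hY : (α + 2) * Y ≤ 1 := by
    nlinarith [mul_nonneg (mul_nonneg hα (by linarith : 0 ≤ α + 2)) (sq_nonneg X)]
  rw [le_div_iff₀ (by linarith)]
  nlinarith [hX]

theorem neg_one_div_sqrt_le_sub_of_sq_sub_mul_le {α X Y : ℝ} (hα : 0 < α + 2) (hY : 0 ≤ Y)
    (h : X ^ 2 - (α + 2) * Y ≤ 1 - (α + 1) ^ 2 * X ^ 2) :
    -1 / √((α + 1) ^ 2 + 1) ≤ Y - X := by
  set s := √((α + 1) ^ 2 + 1)
  have hs : 0 < s := by positivity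
  have hs2 : s ^ 2 = (α + 1) ^ 2 + 1 := Real.sq_sqrt (by positivity)
  have hαs : (α + 2) / 2 ≤ s := (Real.le_sqrt (by linarith) (by positivity)).2 (by nlinarith)
  rw [div_le_iff₀ hs]
  rcases le_or_gt (s * X) 1 with hsX | hsX
  · nlinarith
  · -- `(α + 2) * ((Y - X) * s + 1) ≥ (s * X - 1) * (s * (s * X + 1) - (α + 2)) ≥ 0`
    nlinarith [mul_nonneg (sub_nonneg.2 hsX.le) (by nlinarith : 0 ≤ s * (s * X + 1) - (α + 2))]

/-- For `α > 0` and `f ∈ B₁(α)` with logarithmic coefficients `γ₁, γ₂`: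
`-1/√((α+1)² + 1) ≤ |γ₂| - |γ₁| ≤ 1/(α+2)`. -/
theorem stmt_0 (α : ℝ) (hα : 0 < α) (f h : ℂ → ℂ) (hf : BazilevicB1 α f h) :
    -1 / Real.sqrt ((α + 1) ^ 2 + 1) ≤
      ‖logCoeff2 h‖ - ‖logCoeff1 h‖ ∧
    ‖logCoeff2 h‖ - ‖logCoeff1 h‖ ≤ 1 / (α + 2) := by
  obtain ⟨hlow, hup⟩ :=
    abs_le.1 ((abs_norm_sub_norm_le _ _).trans hf.norm_mul_logCoeff2_sub_sq_le)
  rw [norm_mul, norm_real, Real.norm_of_nonneg (by linarith), norm_pow] at hlow hup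
  exact ⟨neg_one_div_sqrt_le_sub_of_sq_sub_mul_le (by linarith) (norm_nonneg _) (by linarith),
    sub_le_one_div_of_mul_sub_sq_le hα.le (norm_nonneg _) hup⟩
end

section
/- Let α > 0 and let f ∈ B₁(α) with logarithmic coefficients γ₁, γ₂. Then |γ₂| − |γ₁| ≤ 1/(α+2). -/
open Complex Metric

/-!
Put `g := (f z / z)^(α-1) f'(z) = exp (α h z) (1 + z h'(z))`. It has positive real part and
`g 0 = 1`, with `g'(0) = 2 (α+1) γ₁` and `g''(0) = 4 (α+2) (γ₂ + α γ₁²)`. Carathéodory's bounds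
`|g'(0)| ≤ 2` and `|g''(0)| ≤ 4` give `(α+1)|γ₁| ≤ 1` and `(α+2)|γ₂| ≤ 1 + α (α+2)|γ₁|²`, and
`α|γ₁|² ≤ |γ₁|` finishes.

Carathéodory's bounds are Cauchy's estimates for `(g-1)/(g+1)`, which maps the disk into
itself. For the second one it is applied to the even part `(g(z) + g(-z))/2`: its derivative
vanishes at `0`, so the second derivative of the composite at `0` is just `g''(0)/2`.
-/

open Filter Topology

theorem norm_iteratedDeriv_le_factorial_of_norm_le_one {W : ℂ → ℂ}
    (hd : DifferentiableOn ℂ W (ball 0 1)) (hW : ∀ z ∈ ball (0 : ℂ) 1, ‖W z‖ ≤ 1) (n : ℕ) :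
    ‖iteratedDeriv n W 0‖ ≤ n.factorial := by
  have hcont : ContinuousAt (fun r : ℝ => (n.factorial : ℝ) / r ^ n) 1 := by
    fun_prop (disch := simp)
  refine ge_of_tendsto (x := 𝓝[<] (1 : ℝ))
    (tendsto_nhdsWithin_of_tendsto_nhds (by simpa using hcont.tendsto)) ?_
  filter_upwards [Ioo_mem_nhdsLT one_pos] with r ⟨hr0, hr1⟩
  simpa using norm_iteratedDeriv_le_of_forall_mem_sphere_norm_le n hr0
    (hd.diffContOnCl_ball (closedBall_subset_ball hr1)) fun z hz => hW z (sphere_subset_ball hr1 hz)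

noncomputable def cayley (u : ℂ) : ℂ := (u - 1) / (u + 1)

theorem add_one_ne_zero_of_re_pos {u : ℂ} (hu : 0 < u.re) : u + 1 ≠ 0 := by
  intro h
  have := congrArg re h
  simp only [add_re, one_re, zero_re] at this
  linarith

theorem norm_cayley_lt_one {u : ℂ} (hu : 0 < u.re) : ‖cayley u‖ < 1 := by
  rw [cayley, norm_div, div_lt_one (norm_pos_iff.2 (add_one_ne_zero_of_re_pos hu)),
    ← sq_lt_sq₀ (norm_nonneg _) (norm_nonneg _), Complex.sq_norm, Complex.sq_norm,
    normSq_apply, normSq_apply]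
  simp only [sub_re, add_re, sub_im, add_im, one_re, one_im]
  nlinarith

theorem analyticAt_cayley {u : ℂ} (hu : u + 1 ≠ 0) : AnalyticAt ℂ cayley u := by
  unfold cayley
  fun_prop (disch := exact hu)

theorem deriv_cayley_one : deriv cayley 1 = 1 / 2 := by
  have := ((hasDerivAt_id' (1 : ℂ)).sub_const 1).fun_div ((hasDerivAt_id' (1 : ℂ)).add_const 1)
    (by norm_num)
  rw [show cayley = fun u => (u - 1) / (u + 1) from rfl, this.deriv]
  norm_num

section Caratheodory

variable {g : ℂ → ℂ}

theorem norm_iteratedDeriv_cayley_comp_le (hg : AnalyticOnNhd ℂ g (ball 0 1))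
    (hre : ∀ z ∈ ball (0 : ℂ) 1, 0 < (g z).re) (n : ℕ) :
    ‖iteratedDeriv n (cayley ∘ g) 0‖ ≤ n.factorial :=
  norm_iteratedDeriv_le_factorial_of_norm_le_one
    (fun z hz => ((analyticAt_cayley (add_one_ne_zero_of_re_pos (hre z hz))).comp
      (hg z hz)).differentiableAt.differentiableWithinAt)
    (fun z hz => (norm_cayley_lt_one (hre z hz)).le) n

theorem norm_deriv_le_two_of_re_pos (hg : AnalyticOnNhd ℂ g (ball 0 1)) (hg0 : g 0 = 1)
    (hre : ∀ z ∈ ball (0 : ℂ) 1, 0 < (g z).re) : ‖deriv g 0‖ ≤ 2 := by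
  have hcayley : DifferentiableAt ℂ cayley (g 0) := by
    rw [hg0]
    exact (analyticAt_cayley (by norm_num)).differentiableAt
  have key := norm_iteratedDeriv_cayley_comp_le hg hre 1
  rw [iteratedDeriv_one, deriv_comp _ hcayley (hg 0 (mem_ball_self one_pos)).differentiableAt,
    hg0, deriv_cayley_one] at key
  simp only [one_div, norm_mul, norm_inv, norm_ofNat, Nat.factorial_one, Nat.cast_one] at key
  linarith

theorem norm_iteratedDeriv_two_le_four_of_re_pos (hg : AnalyticOnNhd ℂ g (ball 0 1))
    (hg0 : g 0 = 1) (hre : ∀ z ∈ ball (0 : ℂ) 1, 0 < (g z).re) :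
    ‖iteratedDeriv 2 g 0‖ ≤ 4 := by
  have hmem : (0 : ℂ) ∈ ball (0 : ℂ) 1 := mem_ball_self one_pos
  have hneg : ∀ z ∈ ball (0 : ℂ) 1, -z ∈ ball (0 : ℂ) 1 := fun z hz => by simpa using hz
  set e : ℂ → ℂ := fun z => (g z + g (-z)) / 2 with he
  have he_an : AnalyticOnNhd ℂ e (ball 0 1) := fun z hz =>
    ((hg z hz).add ((hg (-z) (hneg z hz)).comp analyticAt_id.neg)).div_const
  have he0 : e 0 = 1 := by simp [he, hg0]
  have he_re : ∀ z ∈ ball (0 : ℂ) 1, 0 < (e z).re := fun z hz => by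
    simp only [he, div_ofNat_re, add_re]
    linarith [hre z hz, hre (-z) (hneg z hz)]
  have hgn : AnalyticAt ℂ (fun z => g (-z)) 0 := (hg (-0) (hneg 0 hmem)).comp analyticAt_id.neg
  have he1 : deriv e 0 = 0 := by
    rw [he, deriv_div_const, deriv_fun_add (hg 0 hmem).differentiableAt hgn.differentiableAt,
      deriv_comp_neg]
    simp
  have he2 : iteratedDeriv 2 e 0 = iteratedDeriv 2 g 0 := by
    rw [he, iteratedDeriv_div_const, iteratedDeriv_fun_add (hg 0 hmem).contDiffAt hgn.contDiffAt,
      iteratedDeriv_comp_neg]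
    simp
  have hcayley : ContDiffAt ℂ 2 cayley (e 0) := by
    rw [he0]
    exact (analyticAt_cayley (by norm_num)).contDiffAt
  have key := norm_iteratedDeriv_cayley_comp_le he_an he_re 2
  rw [iteratedDeriv_scomp_two hcayley (he_an 0 hmem).contDiffAt, he0, he1, he2,
    deriv_cayley_one] at key
  simp only [ne_eq, OfNat.ofNat_ne_zero, not_false_eq_true, zero_pow, smul_eq_mul, zero_mul,
    one_div, zero_add, norm_mul, norm_inv, norm_ofNat, Nat.factorial_two, Nat.cast_ofNat] at key
  linarith

end Caratheodory

section

variable {h : ℂ → ℂ}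

theorem deriv_exp_const_mul_comp_of_eq_zero (c : ℂ) (hh : DifferentiableAt ℂ h 0)
    (h0 : h 0 = 0) : deriv (fun z => exp (c * h z)) 0 = c * deriv h 0 := by
  rw [deriv_cexp (by fun_prop), deriv_const_mul _ hh, h0]
  simp

theorem iteratedDeriv_two_exp_const_mul_comp_of_eq_zero (c : ℂ) (hh : ContDiffAt ℂ 2 h 0)
    (h0 : h 0 = 0) :
    iteratedDeriv 2 (fun z => exp (c * h z)) 0 =
      c * iteratedDeriv 2 h 0 + c ^ 2 * deriv h 0 ^ 2 := by
  rw [show (fun z => exp (c * h z)) = exp ∘ (c * h ·) from rfl,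
    iteratedDeriv_scomp_two (by fun_prop) (by fun_prop)]
  simp only [deriv_const_mul_field', h0, mul_zero, iteratedDeriv_succ, iteratedDeriv_zero,
    Complex.deriv_exp, exp_zero, smul_eq_mul, mul_one, iteratedDeriv_const_mul_field]
  ring

theorem deriv_one_add_mul_deriv (hh : DifferentiableAt ℂ (deriv h) 0) :
    deriv (fun z => 1 + z * deriv h z) 0 = deriv h 0 := by
  rw [deriv_const_add, deriv_fun_mul differentiableAt_fun_id hh]
  simp

theorem iteratedDeriv_two_one_add_mul_deriv (hh : ContDiffAt ℂ 2 (deriv h) 0) :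
    iteratedDeriv 2 (fun z => 1 + z * deriv h z) 0 = 2 * iteratedDeriv 2 h 0 := by
  rw [iteratedDeriv_const_add two_pos, show (fun z => z * deriv h z) = id * deriv h from rfl,
    iteratedDeriv_mul (n := 2) contDiffAt_id hh]
  simp [Finset.sum_range_succ, iteratedDeriv_succ]

theorem deriv_exp_mul_one_add_mul_deriv (c : ℂ) (hh : AnalyticAt ℂ h 0) (h0 : h 0 = 0) :
    deriv (fun z => exp (c * h z) * (1 + z * deriv h z)) 0 = (c + 1) * deriv h 0 := by
  have hE : AnalyticAt ℂ (fun z => exp (c * h z)) 0 := (analyticAt_const.mul hh).cexp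
  have hP : AnalyticAt ℂ (fun z => 1 + z * deriv h z) 0 :=
    analyticAt_const.add (analyticAt_id.mul hh.deriv)
  rw [deriv_fun_mul hE.differentiableAt hP.differentiableAt,
    deriv_exp_const_mul_comp_of_eq_zero c hh.differentiableAt h0,
    deriv_one_add_mul_deriv hh.deriv.differentiableAt, h0]
  simp only [zero_mul, add_zero, mul_one, mul_zero, exp_zero, one_mul]
  ring

theorem iteratedDeriv_two_exp_mul_one_add_mul_deriv (c : ℂ) (hh : AnalyticAt ℂ h 0)
    (h0 : h 0 = 0) :
    iteratedDeriv 2 (fun z => exp (c * h z) * (1 + z * deriv h z)) 0 =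
      (c + 2) * iteratedDeriv 2 h 0 + c * (c + 2) * deriv h 0 ^ 2 := by
  have hE : AnalyticAt ℂ (fun z => exp (c * h z)) 0 := (analyticAt_const.mul hh).cexp
  have hP : AnalyticAt ℂ (fun z => 1 + z * deriv h z) 0 :=
    analyticAt_const.add (analyticAt_id.mul hh.deriv)
  rw [iteratedDeriv_fun_mul (n := 2) hE.contDiffAt hP.contDiffAt]
  simp only [Nat.reduceAdd, Finset.sum_range_succ, Finset.range_one, Finset.sum_singleton,
    Nat.choose_zero_right, Nat.choose_succ_self_right, Nat.choose_self, Nat.cast_one,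
    Nat.cast_ofNat, tsub_zero, Nat.add_one_sub_one, tsub_self, iteratedDeriv_zero,
    iteratedDeriv_one, h0, mul_zero, exp_zero, mul_one, one_mul, zero_mul, add_zero,
    deriv_exp_const_mul_comp_of_eq_zero c hh.differentiableAt h0,
    iteratedDeriv_two_exp_const_mul_comp_of_eq_zero c hh.contDiffAt h0,
    deriv_one_add_mul_deriv hh.deriv.differentiableAt,
    iteratedDeriv_two_one_add_mul_deriv hh.deriv.contDiffAt]
  ring

end

theorem BazilevicB1.exp_mul_deriv_eq {α : ℝ} {f h : ℂ → ℂ} (hf : BazilevicB1 α f h) {z : ℂ}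
    (hz : z ∈ ball (0 : ℂ) 1) :
    exp ((α - 1 : ℂ) * h z) * deriv f z = exp ((α : ℂ) * h z) * (1 + z * deriv h z) := by
  obtain ⟨-, hh, -, -, -, hfh, -⟩ := hf
  have hloc : f =ᶠ[𝓝 z] fun y => y * exp (h y) :=
    eventuallyEq_of_mem (isOpen_ball.mem_nhds hz) hfh
  have hd := (hh z hz).differentiableAt
  rw [hloc.deriv_eq, deriv_fun_mul differentiableAt_fun_id (by fun_prop), deriv_cexp hd,
    deriv_id'', mul_comm (α : ℂ), show (α - 1 : ℂ) * h z = h z * α - h z by ring, exp_sub]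
  field_simp

theorem norm_div_four_sub_norm_div_two_le {α : ℝ} (hα : 0 ≤ α) {a b : ℂ}
    (ha : ‖((α : ℂ) + 1) * a‖ ≤ 2) (hb : ‖((α : ℂ) + 2) * b + α * (α + 2) * a ^ 2‖ ≤ 4) :
    ‖b / 4‖ - ‖a / 2‖ ≤ 1 / (α + 2) := by
  have hnorm₁ : ‖(α : ℂ) + 1‖ = α + 1 := by
    exact_mod_cast Complex.norm_of_nonneg (by linarith : 0 ≤ α + 1)
  have hnorm₂ : ‖(α : ℂ) + 2‖ = α + 2 := by
    exact_mod_cast Complex.norm_of_nonneg (by linarith : 0 ≤ α + 2)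
  have ha' : (α + 1) * ‖a‖ ≤ 2 := by rwa [norm_mul, hnorm₁] at ha
  have hb' : (α + 2) * ‖b‖ ≤ 4 + α * (α + 2) * ‖a‖ ^ 2 := by
    have htri := norm_sub_le (((α : ℂ) + 2) * b + α * (α + 2) * a ^ 2) (α * (α + 2) * a ^ 2)
    rw [add_sub_cancel_right, norm_mul, norm_mul, norm_mul, norm_pow, hnorm₂,
      Complex.norm_of_nonneg hα] at htri
    linarith
  have hb'' : ‖b‖ - α * ‖a‖ ^ 2 ≤ 4 / (α + 2) := by
    rw [le_div_iff₀ (by linarith)]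
    linarith
  have hαa : α * ‖a‖ ^ 2 ≤ 2 * ‖a‖ := by nlinarith [norm_nonneg a]
  rw [norm_div, norm_div, Complex.norm_ofNat, Complex.norm_ofNat]
  linarith [show 4 / (α + 2) = 4 * (1 / (α + 2)) by ring]

/-- For `α > 0` and `f ∈ B₁(α)` with logarithmic coefficients `γ₁, γ₂`:
`|γ₂| - |γ₁| ≤ 1/(α+2)`. -/
theorem stmt_1 (α : ℝ) (hα : 0 < α) (f h : ℂ → ℂ) (hf : BazilevicB1 α f h) :
    ‖logCoeff2 h‖ - ‖logCoeff1 h‖ ≤ 1 / (α + 2) := by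
  set g : ℂ → ℂ := fun z => exp ((α - 1 : ℂ) * h z) * deriv f z
  have hgG : g =ᶠ[𝓝 0] fun z => exp ((α : ℂ) * h z) * (1 + z * deriv h z) :=
    eventuallyEq_of_mem (ball_mem_nhds 0 one_pos) fun z hz => hf.exp_mul_deriv_eq hz
  obtain ⟨hfa, hha, -, hf'0, hh0, -, hre⟩ := hf
  have hg : AnalyticOnNhd ℂ g (ball 0 1) := (analyticOnNhd_const.mul hha).cexp.mul hfa.deriv
  have hg0 : g 0 = 1 := by simp [g, hh0, hf'0]
  have hh := hha 0 (mem_ball_self one_pos)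
  have hcoeff₁ := norm_deriv_le_two_of_re_pos hg hg0 hre
  rw [hgG.deriv_eq, deriv_exp_mul_one_add_mul_deriv _ hh hh0] at hcoeff₁
  have hcoeff₂ := norm_iteratedDeriv_two_le_four_of_re_pos hg hg0 hre
  rw [hgG.iteratedDeriv_eq, iteratedDeriv_two_exp_mul_one_add_mul_deriv _ hh hh0] at hcoeff₂
  rw [logCoeff1, logCoeff2]
  exact norm_div_four_sub_norm_div_two_le hα.le hcoeff₁ hcoeff₂
end

section
/- For every α > 0 there exists a function f ∈ B₁(α) whose logarithmic coefficients satisfy |γ₂| − |γ₁| = 1/(α+2); namely the function determined by (f(z)/z)^{α−1} f'(z) = (1+z²)/(1−z²) has a₂ = 0 and a₃ = 2/(α+2), hence γ₁ = 0 and |γ₂| = 1/(α+2). In particular, the upper bound |γ₂| − |γ₁| ≤ 1/(α+2) on B₁(α) is sharp for every α > 0. -/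
open Complex Metric

/-!
For `f = z exp h` put `G = (f/z)^α = exp (α h)`; then `(f/z)^(α-1) f' = p` reads
`G + z G' / α = p`. For `p(z) = P(z²)` with `P(w) = (1+w)/(1-w)` its solution regular at `0` is
`G(z) = Q(z²)`, `Q(w) = ∫₀¹ P(s^(2/α) w) ds`, as one sees by integrating
`d/ds (s P(s^(2/α) w))` over `[0,1]`. Being an average of values of `P`, `Q` has positive real
part, so `h = α⁻¹ log G` is analytic on the disk and `f ∈ B₁(α)`. Since `G` is even, `h'(0) = 0`,
and `h''(0) = 2 Q'(0) / α = 4/(α+2)` because `Q'(0) = P'(0) / (1 + 2/α)`. The Taylor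
coefficients follow from `a₂ = 2γ₁` and `a₃ = 2γ₂ + 2γ₁²`, valid for every `f = z exp h`.
-/

open Set MeasureTheory intervalIntegral Topology

noncomputable def radialAverage (c : ℝ) (P : ℂ → ℂ) (w : ℂ) : ℂ :=
  ∫ s in (0 : ℝ)..1, P ((s ^ c : ℝ) * w)

section RadialAverage

variable {c : ℝ} {P : ℂ → ℂ} {w : ℂ}

lemma rpow_mul_mem_ball (hc : 0 ≤ c) {s : ℝ} (hs : s ∈ Icc (0 : ℝ) 1) {r : ℝ}
    (hw : w ∈ ball (0 : ℂ) r) : ((s ^ c : ℝ) : ℂ) * w ∈ ball (0 : ℂ) r := by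
  rw [mem_ball_zero_iff, norm_mul, Complex.norm_real,
    Real.norm_of_nonneg (Real.rpow_nonneg hs.1 c)] at *
  exact (mul_le_of_le_one_left (norm_nonneg w) (Real.rpow_le_one hs.1 hs.2 hc)).trans_lt hw

lemma continuousOn_comp_rpow_mul {Q : ℂ → ℂ} (hc : 0 ≤ c) (hQ : ContinuousOn Q (ball 0 1))
    (hw : w ∈ ball (0 : ℂ) 1) :
    ContinuousOn (fun s : ℝ => Q ((s ^ c : ℝ) * w)) (Icc 0 1) :=
  hQ.comp (by fun_prop (disch := exact hc)) fun _ hs => rpow_mul_mem_ball hc hs hw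

lemma radialAverage_zero : radialAverage c P 0 = P 0 := by
  simp [radialAverage]

lemma re_radialAverage_pos (hc : 0 ≤ c) (hPc : ContinuousOn P (ball 0 1))
    (hP : ∀ w ∈ ball (0 : ℂ) 1, 0 < (P w).re) (hw : w ∈ ball (0 : ℂ) 1) :
    0 < (radialAverage c P w).re := by
  have hcont := continuousOn_comp_rpow_mul hc hPc hw
  have hint := hcont.intervalIntegrable_of_Icc (μ := volume) zero_le_one
  rw [radialAverage, ← reCLM_apply, ← reCLM.intervalIntegral_comp_comm hint]
  refine intervalIntegral_pos_of_pos_on ?_ (fun s hs => hP _ (rpow_mul_mem_ball hc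
    (Ioo_subset_Icc_self hs) hw)) zero_lt_one
  exact (reCLM.continuous.comp_continuousOn hcont).intervalIntegrable_of_Icc (μ := volume)
    zero_le_one

lemma hasDerivAt_comp_mul {a x : ℂ} (hP : DifferentiableOn ℂ P (ball 0 1))
    (hx : a * x ∈ ball (0 : ℂ) 1) :
    HasDerivAt (fun y => P (a * y)) (a * deriv P (a * x)) x := by
  rw [mul_comm a]
  exact (hP.differentiableAt (isOpen_ball.mem_nhds hx)).hasDerivAt.comp x (hasDerivAt_const_mul a)

lemma hasDerivAt_radialAverage (hc : 0 ≤ c) (hP : DifferentiableOn ℂ P (ball 0 1))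
    (hw : w ∈ ball (0 : ℂ) 1) :
    HasDerivAt (radialAverage c P)
      (∫ s in (0 : ℝ)..1, ((s ^ c : ℝ) : ℂ) * deriv P ((s ^ c : ℝ) * w)) w := by
  obtain ⟨r, hwr, hr⟩ : ∃ r, ‖w‖ < r ∧ r < 1 := exists_between (mem_ball_zero_iff.mp hw)
  have hP' : ContinuousOn (deriv P) (ball 0 1) :=
    (hP.analyticOnNhd isOpen_ball).deriv.continuousOn
  obtain ⟨M, hM⟩ := (isCompact_closedBall (0 : ℂ) r).exists_bound_of_continuousOn
    (hP'.mono (closedBall_subset_ball hr))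
  have hnhds : ball (0 : ℂ) r ∈ 𝓝 w := isOpen_ball.mem_nhds (mem_ball_zero_iff.mpr hwr)
  have hsub : ball (0 : ℂ) r ⊆ ball 0 1 := ball_subset_ball hr.le
  have hIoc : uIoc (0 : ℝ) 1 ⊆ Icc 0 1 := by
    rw [uIoc_of_le zero_le_one]; exact Ioc_subset_Icc_self
  refine (hasDerivAt_integral_of_dominated_loc_of_deriv_le
    (μ := volume) (F := fun x s => P ((s ^ c : ℝ) * x))
    (F' := fun x s => ((s ^ c : ℝ) : ℂ) * deriv P ((s ^ c : ℝ) * x)) (bound := fun _ => M) hnhds ?_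
    ((continuousOn_comp_rpow_mul hc hP.continuousOn hw).intervalIntegrable_of_Icc zero_le_one)
    ?_ ?_ intervalIntegrable_const ?_).2
  · filter_upwards [hnhds] with x hx
    exact ((continuousOn_comp_rpow_mul hc hP.continuousOn (hsub hx)).mono hIoc).aestronglyMeasurable
      measurableSet_uIoc
  · exact (((Complex.continuous_ofReal.comp (Real.continuous_rpow_const hc)).continuousOn.mul
      (continuousOn_comp_rpow_mul hc hP' hw)).mono hIoc).aestronglyMeasurable measurableSet_uIoc
  · refine ae_of_all _ fun s hs x hx => ?_
    have hs' := hIoc hs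
    rw [norm_mul, Complex.norm_real, Real.norm_of_nonneg (Real.rpow_nonneg hs'.1 c)]
    exact (mul_le_of_le_one_left (norm_nonneg _) (Real.rpow_le_one hs'.1 hs'.2 hc)).trans
      (hM _ (ball_subset_closedBall (rpow_mul_mem_ball hc hs' hx)))
  · exact ae_of_all _ fun s hs x hx =>
      hasDerivAt_comp_mul hP (rpow_mul_mem_ball hc (hIoc hs) (hsub hx))

lemma radialAverage_add_mul_deriv (hc : 0 ≤ c) (hP : DifferentiableOn ℂ P (ball 0 1))
    (hw : w ∈ ball (0 : ℂ) 1) :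
    radialAverage c P w + c * w * deriv (radialAverage c P) w = P w := by
  have hP' : ContinuousOn (deriv P) (ball 0 1) :=
    (hP.analyticOnNhd isOpen_ball).deriv.continuousOn
  have hcont : ContinuousOn (fun s : ℝ => P ((s ^ c : ℝ) * w)) (Icc 0 1) :=
    continuousOn_comp_rpow_mul hc hP.continuousOn hw
  have hcont' : ContinuousOn (fun s : ℝ => ((s ^ c : ℝ) : ℂ) * deriv P ((s ^ c : ℝ) * w))
      (Icc 0 1) :=
    (Complex.continuous_ofReal.comp (Real.continuous_rpow_const hc)).continuousOn.mul
      (continuousOn_comp_rpow_mul hc hP' hw)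
  have hderiv : ∀ s ∈ Ioo (0 : ℝ) 1, HasDerivAt (fun s : ℝ => (s : ℂ) * P ((s ^ c : ℝ) * w))
      (P ((s ^ c : ℝ) * w) + c * w * (((s ^ c : ℝ) : ℂ) * deriv P ((s ^ c : ℝ) * w))) s := by
    intro s hs
    have hrpow : HasDerivAt (fun s : ℝ => ((s ^ c : ℝ) : ℂ) * w)
        (((c * s ^ (c - 1) : ℝ) : ℂ) * w) s :=
      (Real.hasDerivAt_rpow_const (Or.inl hs.1.ne')).ofReal_comp.mul_const w
    have hPs := (hP.differentiableAt (isOpen_ball.mem_nhds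
      (rpow_mul_mem_ball hc (Ioo_subset_Icc_self hs) hw))).hasDerivAt.comp s hrpow
    refine ((hasDerivAt_id s).ofReal_comp.mul hPs).congr_deriv ?_
    have hs0 : (s : ℂ) ≠ 0 := Complex.ofReal_ne_zero.mpr hs.1.ne'
    rw [Real.rpow_sub_one hs.1.ne', id, Function.comp_apply]
    push_cast
    field_simp
  have hftc := integral_eq_sub_of_hasDeriv_right_of_le zero_le_one
    ((Complex.continuous_ofReal.continuousOn).mul hcont)
    (fun s hs => (hderiv s hs).hasDerivWithinAt)
    ((hcont.intervalIntegrable_of_Icc zero_le_one).add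
      ((hcont'.intervalIntegrable_of_Icc zero_le_one).const_mul _))
  rw [integral_add (hcont.intervalIntegrable_of_Icc zero_le_one)
    ((hcont'.intervalIntegrable_of_Icc zero_le_one).const_mul _),
    intervalIntegral.integral_const_mul] at hftc
  rw [radialAverage, (hasDerivAt_radialAverage hc hP hw).deriv, hftc]
  simp

lemma differentiableOn_radialAverage (hc : 0 ≤ c) (hP : DifferentiableOn ℂ P (ball 0 1)) :
    DifferentiableOn ℂ (radialAverage c P) (ball 0 1) :=
  fun _ hw => (hasDerivAt_radialAverage hc hP hw).differentiableAt.differentiableWithinAt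

lemma deriv_radialAverage_zero (hc : 0 ≤ c) (hP : DifferentiableOn ℂ P (ball 0 1)) :
    deriv (radialAverage c P) 0 = deriv P 0 / (c + 1) := by
  have hc1 : (c : ℂ) + 1 ≠ 0 := by exact_mod_cast (by linarith : c + 1 ≠ 0)
  rw [(hasDerivAt_radialAverage hc hP (mem_ball_self one_pos)).deriv]
  simp only [mul_zero, intervalIntegral.integral_mul_const, intervalIntegral.integral_ofReal,
    integral_rpow (Or.inl (by linarith : -1 < c)), Real.one_rpow,
    Real.zero_rpow (by linarith : c + 1 ≠ 0)]
  push_cast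
  field_simp
  ring

end RadialAverage

lemma iteratedDeriv_succ_mul_self_zero {g : ℂ → ℂ} (n : ℕ) (hg : ContDiffAt ℂ (n + 1) g 0) :
    iteratedDeriv (n + 1) (fun z => z * g z) 0 = (n + 1) * iteratedDeriv n g 0 := by
  rw [iteratedDeriv_fun_mul contDiffAt_id (by exact_mod_cast hg),
    Finset.sum_eq_single 1 (fun i _ hi => by simp [iteratedDeriv_fun_id_zero, hi])
      (by simp)]
  simp [iteratedDeriv_fun_id_zero]

section LogarithmicCoefficients

variable {h : ℂ → ℂ}

lemma iteratedDeriv_cexp (n : ℕ) : iteratedDeriv n cexp = cexp := by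
  rw [iteratedDeriv_eq_iterate, Complex.iter_deriv_exp]

lemma coeff2_mul_cexp (hh : ContDiffAt ℂ 2 h 0) (h0 : h 0 = 0) :
    coeff2 (fun z => z * cexp (h z)) = 2 * logCoeff1 h := by
  have hf := iteratedDeriv_succ_mul_self_zero 1 hh.cexp
  rw [iteratedDeriv_one, deriv_cexp (hh.differentiableAt (by norm_num)), h0,
    Complex.exp_zero] at hf
  rw [coeff2, logCoeff1, show (2 : ℕ) = 1 + 1 from rfl, hf]
  push_cast
  ring

lemma coeff3_mul_cexp (hh : ContDiffAt ℂ 3 h 0) (h0 : h 0 = 0) :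
    coeff3 (fun z => z * cexp (h z)) = 2 * logCoeff2 h + 2 * logCoeff1 h ^ 2 := by
  have hf := iteratedDeriv_succ_mul_self_zero 2 hh.cexp
  rw [← Function.comp_def cexp h, iteratedDeriv_comp_two contDiff_exp.contDiffAt
    (hh.of_le (by norm_num)), iteratedDeriv_cexp, Complex.deriv_exp, h0, Complex.exp_zero] at hf
  rw [coeff3, logCoeff1, logCoeff2, show (3 : ℕ) = 2 + 1 from rfl, hf]
  push_cast
  ring

lemma deriv_mul_cexp_zero (hh : DifferentiableAt ℂ h 0) (h0 : h 0 = 0) :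
    deriv (fun z => z * cexp (h z)) 0 = 1 := by
  rw [((hasDerivAt_id' 0).fun_mul hh.hasDerivAt.cexp).deriv, h0]
  simp

end LogarithmicCoefficients

lemma re_one_add_div_one_sub_pos {w : ℂ} (hw : w ∈ ball (0 : ℂ) 1) :
    0 < ((1 + w) / (1 - w)).re := by
  have hw' : w.re * w.re + w.im * w.im < 1 := by
    rw [← normSq_apply, normSq_eq_norm_sq]
    have := mem_ball_zero_iff.mp hw
    nlinarith [norm_nonneg w]
  have hne : 1 - w ≠ 0 := sub_ne_zero.mpr (fun h => by simp [← h] at hw)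
  rw [div_re, ← add_div]
  refine div_pos ?_ (normSq_pos.mpr hne)
  simp only [add_re, sub_re, one_re, add_im, sub_im, one_im]
  nlinarith

lemma deriv_one_add_div_one_sub_zero : deriv (fun w : ℂ => (1 + w) / (1 - w)) 0 = 2 := by
  have h := ((hasDerivAt_id' (0 : ℂ)).const_add 1).fun_div
    ((hasDerivAt_id' (0 : ℂ)).const_sub 1) (by norm_num)
  rw [h.deriv]
  norm_num

lemma differentiableOn_one_add_div_one_sub :
    DifferentiableOn ℂ (fun w : ℂ => (1 + w) / (1 - w)) (ball 0 1) :=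
  fun w hw => ((differentiableAt_id.const_add 1).div (differentiableAt_id.const_sub 1)
    (sub_ne_zero.mpr (fun h => by simp [← h] at hw))).differentiableWithinAt

lemma iteratedDeriv_two_log {y : ℂ} (hy : y ∈ slitPlane) : iteratedDeriv 2 log y = -(y ^ 2)⁻¹ := by
  have hlog : deriv log =ᶠ[𝓝 y] fun z => z⁻¹ := by
    filter_upwards [isOpen_slitPlane.mem_nhds hy] with z hz
    exact (hasStrictDerivAt_log hz).hasDerivAt.deriv
  rw [iteratedDeriv_succ, iteratedDeriv_one, hlog.deriv_eq, deriv_inv]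

lemma iteratedDeriv_two_log_comp {G : ℂ → ℂ} {x : ℂ} (hG : ContDiffAt ℂ 2 G x)
    (hx : G x ∈ slitPlane) :
    iteratedDeriv 2 (fun z => log (G z)) x =
      iteratedDeriv 2 G x / G x - (deriv G x / G x) ^ 2 := by
  rw [← Function.comp_def log G, iteratedDeriv_comp_two (contDiffAt_log hx) hG,
    iteratedDeriv_two_log hx, (hasStrictDerivAt_log hx).hasDerivAt.deriv]
  ring

lemma iteratedDeriv_two_comp_sq_zero {Q : ℂ → ℂ} (hQ : ContDiffAt ℂ 2 Q 0) :
    iteratedDeriv 2 (fun z => Q (z ^ 2)) 0 = 2 * deriv Q 0 := by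
  have h := iteratedDeriv_comp_two (f := fun z : ℂ => z ^ 2) (x := 0) (by simpa using hQ)
    (contDiff_id.pow 2).contDiffAt
  simp only [Function.comp_def] at h
  rw [h]
  simp [mul_comm]

lemma cexp_sub_one_mul_deriv_mul_cexp {a G' z : ℂ} {G : ℂ → ℂ} (ha : a ≠ 0)
    (hG : HasDerivAt G G' z) (hz : G z ∈ slitPlane) :
    cexp ((a - 1) * (a⁻¹ * log (G z))) * deriv (fun z => z * cexp (a⁻¹ * log (G z))) z =
      G z + a⁻¹ * z * G' := by
  have hGz : G z ≠ 0 := slitPlane_ne_zero hz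
  have hpow : cexp ((a - 1) * (a⁻¹ * log (G z))) * cexp (a⁻¹ * log (G z)) = G z := by
    rw [← Complex.exp_add, show (a - 1) * (a⁻¹ * log (G z)) + a⁻¹ * log (G z) = log (G z) by
      field_simp; ring, Complex.exp_log hGz]
  rw [((hasDerivAt_id' z).fun_mul ((hG.clog hz).const_mul a⁻¹).cexp).deriv]
  calc _ = cexp ((a - 1) * (a⁻¹ * log (G z))) * cexp (a⁻¹ * log (G z)) *
        (1 + a⁻¹ * z * (G' / G z)) := by ring
    _ = _ := by rw [hpow]; field_simp

lemma sq_mem_ball {z : ℂ} (hz : z ∈ ball (0 : ℂ) 1) : z ^ 2 ∈ ball (0 : ℂ) 1 := by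
  rw [mem_ball_zero_iff] at hz ⊢
  rw [norm_pow]
  nlinarith [norm_nonneg z]

section Extremal

variable {α : ℝ} {z : ℂ}

/-- `(f z / z) ^ α = extremalQuotientPow α (z ^ 2)` for the extremal function
`f z = z * exp (extremalLog α z)`. -/
noncomputable def extremalQuotientPow (α : ℝ) : ℂ → ℂ :=
  radialAverage (2 / α) fun w => (1 + w) / (1 - w)

noncomputable def extremalLog (α : ℝ) (z : ℂ) : ℂ :=
  (α : ℂ)⁻¹ * log (extremalQuotientPow α (z ^ 2))

lemma differentiableOn_extremalQuotientPow (hα : 0 < α) :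
    DifferentiableOn ℂ (extremalQuotientPow α) (ball 0 1) :=
  differentiableOn_radialAverage (by positivity) differentiableOn_one_add_div_one_sub

lemma extremalQuotientPow_mem_slitPlane (hα : 0 < α) {w : ℂ} (hw : w ∈ ball (0 : ℂ) 1) :
    extremalQuotientPow α w ∈ slitPlane :=
  Or.inl (re_radialAverage_pos (by positivity) differentiableOn_one_add_div_one_sub.continuousOn
    (fun _ => re_one_add_div_one_sub_pos) hw)

lemma extremalQuotientPow_zero : extremalQuotientPow α 0 = 1 := by
  simp [extremalQuotientPow, radialAverage_zero]

lemma deriv_extremalQuotientPow_zero (hα : 0 < α) :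
    deriv (extremalQuotientPow α) 0 = 2 * α / (α + 2) := by
  have hα' : (α : ℂ) ≠ 0 := ofReal_ne_zero.mpr hα.ne'
  rw [extremalQuotientPow, deriv_radialAverage_zero (by positivity)
    differentiableOn_one_add_div_one_sub, deriv_one_add_div_one_sub_zero]
  push_cast
  rw [div_add_one hα', div_div_eq_mul_div, add_comm]

lemma extremalQuotientPow_add_mul_deriv (hα : 0 < α) {w : ℂ} (hw : w ∈ ball (0 : ℂ) 1) :
    extremalQuotientPow α w + (2 / α : ℝ) * w * deriv (extremalQuotientPow α) w =
      (1 + w) / (1 - w) :=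
  radialAverage_add_mul_deriv (by positivity) differentiableOn_one_add_div_one_sub hw

lemma hasDerivAt_extremalQuotientPow_sq (hα : 0 < α) (hz : z ∈ ball (0 : ℂ) 1) :
    HasDerivAt (fun z => extremalQuotientPow α (z ^ 2))
      (deriv (extremalQuotientPow α) (z ^ 2) * (2 * z)) z := by
  have hQ := ((differentiableOn_extremalQuotientPow hα).differentiableAt
    (isOpen_ball.mem_nhds (sq_mem_ball hz))).hasDerivAt
  exact (hQ.comp z (hasDerivAt_pow 2 z)).congr_deriv (by simp)

lemma hasDerivAt_extremalLog (hα : 0 < α) (hz : z ∈ ball (0 : ℂ) 1) :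
    HasDerivAt (extremalLog α) ((α : ℂ)⁻¹ * (deriv (extremalQuotientPow α) (z ^ 2) * (2 * z) /
      extremalQuotientPow α (z ^ 2))) z :=
  ((hasDerivAt_extremalQuotientPow_sq hα hz).clog
    (extremalQuotientPow_mem_slitPlane hα (sq_mem_ball hz))).const_mul _

lemma analyticOnNhd_extremalLog (hα : 0 < α) : AnalyticOnNhd ℂ (extremalLog α) (ball 0 1) :=
  DifferentiableOn.analyticOnNhd
    (fun _ hz => (hasDerivAt_extremalLog hα hz).differentiableAt.differentiableWithinAt)
    isOpen_ball

lemma extremalLog_zero : extremalLog α 0 = 0 := by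
  simp [extremalLog, extremalQuotientPow_zero]

lemma deriv_extremalLog_zero (hα : 0 < α) : deriv (extremalLog α) 0 = 0 := by
  simp [(hasDerivAt_extremalLog hα (mem_ball_self one_pos)).deriv]

lemma iteratedDeriv_two_extremalLog_zero (hα : 0 < α) :
    iteratedDeriv 2 (extremalLog α) 0 = 4 / (α + 2) := by
  have hα' : (α : ℂ) ≠ 0 := ofReal_ne_zero.mpr hα.ne'
  have hα2 : (α : ℂ) + 2 ≠ 0 := by exact_mod_cast (by linarith : α + 2 ≠ 0)
  have hQ : ContDiffAt ℂ 2 (extremalQuotientPow α) 0 :=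
    ((differentiableOn_extremalQuotientPow hα).analyticOnNhd isOpen_ball 0
      (mem_ball_self one_pos)).contDiffAt
  have hG : ContDiffAt ℂ 2 (fun z => extremalQuotientPow α (z ^ 2)) 0 :=
    (by simpa using hQ : ContDiffAt ℂ 2 (extremalQuotientPow α) (0 ^ 2)).comp 0
      (contDiff_id.pow 2).contDiffAt
  unfold extremalLog
  rw [iteratedDeriv_const_mul_field, iteratedDeriv_two_log_comp hG
    (extremalQuotientPow_mem_slitPlane hα (sq_mem_ball (mem_ball_self one_pos))),
    iteratedDeriv_two_comp_sq_zero hQ, (hasDerivAt_extremalQuotientPow_sq hα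
      (mem_ball_self one_pos)).deriv, deriv_extremalQuotientPow_zero hα]
  rw [zero_pow two_ne_zero, extremalQuotientPow_zero]
  field_simp
  ring

lemma cexp_sub_one_mul_deriv_extremal (hα : 0 < α) (hz : z ∈ ball (0 : ℂ) 1) :
    cexp ((α - 1 : ℂ) * extremalLog α z) * deriv (fun z => z * cexp (extremalLog α z)) z =
      (1 + z ^ 2) / (1 - z ^ 2) := by
  simp only [extremalLog]
  rw [cexp_sub_one_mul_deriv_mul_cexp (ofReal_ne_zero.mpr hα.ne')
    (hasDerivAt_extremalQuotientPow_sq hα hz)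
    (extremalQuotientPow_mem_slitPlane hα (sq_mem_ball hz)),
    ← extremalQuotientPow_add_mul_deriv hα (sq_mem_ball hz)]
  push_cast
  ring

end Extremal

/-- For every `α > 0` there is `f ∈ B₁(α)` with `(f z/z)^(α-1) * f' z = (1+z²)/(1-z²)`,
which has `a₂ = 0`, `a₃ = 2/(α+2)`, hence `γ₁ = 0` and `|γ₂| = 1/(α+2)`, so that
`|γ₂| - |γ₁| = 1/(α+2)`: the upper bound is sharp for every `α > 0`. -/
theorem stmt_3 (α : ℝ) (hα : 0 < α) :
    ∃ f h : ℂ → ℂ, BazilevicB1 α f h ∧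
      (∀ z ∈ ball (0 : ℂ) 1,
        Complex.exp ((α - 1 : ℂ) * h z) * deriv f z = (1 + z ^ 2) / (1 - z ^ 2)) ∧
      coeff2 f = 0 ∧ coeff3 f = ((2 / (α + 2) : ℝ) : ℂ) ∧
      logCoeff1 h = 0 ∧ ‖logCoeff2 h‖ = 1 / (α + 2) ∧
      ‖logCoeff2 h‖ - ‖logCoeff1 h‖ = 1 / (α + 2) := by
  have hh := analyticOnNhd_extremalLog hα
  have hh0 : ContDiffAt ℂ 3 (extremalLog α) 0 := (hh 0 (mem_ball_self one_pos)).contDiffAt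
  have hγ₁ : logCoeff1 (extremalLog α) = 0 := by
    rw [logCoeff1, deriv_extremalLog_zero hα, zero_div]
  have hγ₂ : logCoeff2 (extremalLog α) = ((1 / (α + 2) : ℝ) : ℂ) := by
    rw [logCoeff2, iteratedDeriv_two_extremalLog_zero hα]
    push_cast
    ring
  have hnorm : ‖logCoeff2 (extremalLog α)‖ = 1 / (α + 2) := by
    rw [hγ₂, norm_real, Real.norm_of_nonneg (by positivity)]
  refine ⟨fun z => z * cexp (extremalLog α z), extremalLog α,
    ⟨?_, hh, by simp, deriv_mul_cexp_zero (hh0.differentiableAt (by norm_num)) extremalLog_zero,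
      extremalLog_zero, fun _ _ => rfl, fun z hz => ?_⟩,
    fun z hz => cexp_sub_one_mul_deriv_extremal hα hz, ?_, ?_, hγ₁, hnorm,
    by rw [hγ₁, norm_zero, sub_zero, hnorm]⟩
  · exact (differentiableOn_id.fun_mul hh.differentiableOn.cexp).analyticOnNhd isOpen_ball
  · rw [cexp_sub_one_mul_deriv_extremal hα hz]
    exact re_one_add_div_one_sub_pos (sq_mem_ball hz)
  · rw [coeff2_mul_cexp (hh0.of_le (by norm_num)) extremalLog_zero, hγ₁, mul_zero]
  · rw [coeff3_mul_cexp hh0 extremalLog_zero, hγ₁, hγ₂]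
    push_cast
    ring
end

section
/- Let α > 0 and let f ∈ B₁(α) with Taylor coefficients a₂, a₃. Then |a₂| ≤ 2/(α+1). -/
open Complex Metric

/-!
Writing `f z = z * exp (h z)`, the function `p z = (f z / z) ^ (α - 1) * f' z` equals
`exp (α * h z) * (1 + z * h' z)`, so `p 0 = 1`, `p' 0 = (α + 1) h' 0` and `a₂ = h' 0`.
Since `Re p > 0`, the Cayley transform `(p - 1) / (p + 1)` maps the disk into itself and fixes
`0`, and the Schwarz lemma gives the Carathéodory bound `‖p' 0‖ ≤ 2`.
-/

open Set Filter Topology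

theorem norm_sub_one_lt_norm_add_one_of_re_pos {w : ℂ} (hw : 0 < w.re) :
    ‖w - 1‖ < ‖w + 1‖ := by
  have hsq : normSq (w - 1) < normSq (w + 1) := by
    simp only [normSq_apply, sub_re, sub_im, add_re, add_im, one_re, one_im]
    nlinarith
  simpa only [norm_def] using Real.sqrt_lt_sqrt (normSq_nonneg _) hsq

theorem norm_deriv_le_two_div_of_re_pos {p : ℂ → ℂ} {c : ℂ} {R : ℝ}
    (hp : DifferentiableOn ℂ p (ball c R)) (hpc : p c = 1) (hR : 0 < R)
    (hre : ∀ z ∈ ball c R, 0 < (p z).re) : ‖deriv p c‖ ≤ 2 / R := by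
  have hne : ∀ z ∈ ball c R, p z + 1 ≠ 0 := fun z hz hz' => by
    have := hre z hz
    rw [add_eq_zero_iff_eq_neg.mp hz'] at this
    norm_num at this
  set φ : ℂ → ℂ := fun z => (p z - 1) / (p z + 1)
  have hφ : DifferentiableOn ℂ φ (ball c R) :=
    (hp.sub_const 1).div (hp.add_const 1) hne
  have hφ_maps : MapsTo φ (ball c R) (closedBall (φ c) 1) := fun z hz => by
    have hlt := norm_sub_one_lt_norm_add_one_of_re_pos (hre z hz)
    simp only [φ, hpc, sub_self, zero_div, mem_closedBall_zero_iff, norm_div]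
    exact (div_lt_one (hlt.trans_le' (norm_nonneg _))).2 hlt |>.le
  have hφ_deriv : deriv φ c = deriv p c / 2 := by
    have hpd := (hp.differentiableAt (isOpen_ball.mem_nhds (mem_ball_self hR))).hasDerivAt
    have : HasDerivAt φ _ c := (hpd.sub_const 1).div (hpd.add_const 1) (by norm_num [hpc])
    rw [this.deriv, hpc]
    ring
  have := norm_deriv_le_div_of_mapsTo_ball hφ hφ_maps hR
  rw [hφ_deriv, norm_div, Complex.norm_two, div_le_div_iff₀ two_pos hR] at this
  rwa [le_div_iff₀ hR, ← one_mul 2]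

/-- For `f z = z * exp (h z)` this is `(f z / z) ^ (β - 1) * f' z`, with the branch of the power
determined by `h`. -/
noncomputable def bazilevicExpr (β : ℂ) (h : ℂ → ℂ) (z : ℂ) : ℂ :=
  exp (β * h z) * (1 + z * deriv h z)

theorem bazilevicExpr_eq_exp_mul (β : ℂ) (h : ℂ → ℂ) (z : ℂ) :
    bazilevicExpr β h z = exp ((β - 1) * h z) * bazilevicExpr 1 h z := by
  simp only [bazilevicExpr, ← mul_assoc, ← exp_add]
  ring_nf

theorem hasDerivAt_mul_exp {h : ℂ → ℂ} {z : ℂ} (hh : DifferentiableAt ℂ h z) :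
    HasDerivAt (fun w => w * exp (h w)) (bazilevicExpr 1 h z) z := by
  have hd : HasDerivAt (fun w => w * exp (h w)) (1 * exp (h z) + z * (exp (h z) * deriv h z)) z :=
    (hasDerivAt_id' z).mul hh.hasDerivAt.cexp
  convert hd using 1
  simp only [bazilevicExpr, one_mul]
  ring

theorem differentiableOn_bazilevicExpr {h : ℂ → ℂ} {s : Set ℂ} (hh : AnalyticOnNhd ℂ h s)
    (β : ℂ) : DifferentiableOn ℂ (bazilevicExpr β h) s := fun z hz =>
  (((hh z hz).differentiableAt.const_mul β).cexp.mul
    ((differentiableAt_id.mul (hh.deriv z hz).differentiableAt).const_add 1)).differentiableWithinAt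

theorem hasDerivAt_bazilevicExpr_zero {h : ℂ → ℂ} (hh : AnalyticAt ℂ h 0) (hh0 : h 0 = 0)
    (β : ℂ) : HasDerivAt (bazilevicExpr β h) ((β + 1) * deriv h 0) 0 := by
  have hd : HasDerivAt (bazilevicExpr β h)
      (exp (β * h 0) * (β * deriv h 0) * (1 + 0 * deriv h 0) +
        exp (β * h 0) * (1 * deriv h 0 + 0 * deriv (deriv h) 0)) 0 :=
    (hh.differentiableAt.hasDerivAt.const_mul β).cexp.mul
      (((hasDerivAt_id' 0).mul hh.deriv.differentiableAt.hasDerivAt).const_add 1)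
  convert hd using 1
  simp only [hh0, mul_zero, exp_zero, zero_mul, add_zero]
  ring

namespace BazilevicB1

variable {α : ℝ} {f h : ℂ → ℂ}

theorem deriv_eq (hf : BazilevicB1 α f h) {z : ℂ} (hz : z ∈ ball (0 : ℂ) 1) :
    deriv f z = bazilevicExpr 1 h z := by
  obtain ⟨-, hh, -, -, -, hfh, -⟩ := hf
  refine (hasDerivAt_mul_exp (hh z hz).differentiableAt).congr_of_eventuallyEq ?_ |>.deriv
  filter_upwards [isOpen_ball.mem_nhds hz] with w hw using hfh w hw

theorem coeff2_eq (hf : BazilevicB1 α f h) : coeff2 f = deriv h 0 := by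
  have h0 : (0 : ℂ) ∈ ball (0 : ℂ) 1 := mem_ball_self one_pos
  have hderiv : deriv f =ᶠ[𝓝 0] bazilevicExpr 1 h := by
    filter_upwards [isOpen_ball.mem_nhds h0] with w hw using hf.deriv_eq hw
  have h2 : iteratedDeriv 2 f 0 = 2 * deriv h 0 := by
    obtain ⟨-, hh, -, -, hh0, -, -⟩ := hf
    rw [iteratedDeriv_succ, iteratedDeriv_one, hderiv.deriv_eq,
      (hasDerivAt_bazilevicExpr_zero (hh 0 h0) hh0 1).deriv]
    norm_num
  rw [coeff2, h2]
  ring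

theorem re_bazilevicExpr_pos (hf : BazilevicB1 α f h) {z : ℂ} (hz : z ∈ ball (0 : ℂ) 1) :
    0 < (bazilevicExpr α h z).re := by
  obtain ⟨-, -, -, -, -, -, hre⟩ := id hf
  rw [bazilevicExpr_eq_exp_mul, ← hf.deriv_eq hz]
  exact_mod_cast hre z hz

end BazilevicB1

/-- For `α > 0` and `f ∈ B₁(α)`: `|a₂| ≤ 2/(α+1)`. -/
theorem stmt_5 (α : ℝ) (hα : 0 < α) (f h : ℂ → ℂ) (hf : BazilevicB1 α f h) :
    ‖coeff2 f‖ ≤ 2 / (α + 1) := by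
  obtain ⟨-, hh, -, -, hh0, -, -⟩ := id hf
  have hα1 : (0 : ℝ) < α + 1 := by linarith
  have hp0 : bazilevicExpr α h 0 = 1 := by simp [bazilevicExpr, hh0]
  have hcarath := norm_deriv_le_two_div_of_re_pos (differentiableOn_bazilevicExpr hh α)
    hp0 one_pos fun z hz => hf.re_bazilevicExpr_pos hz
  rw [(hasDerivAt_bazilevicExpr_zero (hh 0 (mem_ball_self one_pos)) hh0 α).deriv, norm_mul,
    ← ofReal_one, ← ofReal_add, norm_real, Real.norm_of_nonneg hα1.le, div_one] at hcarath
  rw [hf.coeff2_eq, le_div_iff₀ hα1, mul_comm]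
  exact hcarath
end
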